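/- arXiv:2510.26458 — 5 statements merged into one kernel-verified Lean document; each statement's English description precedes it below -/
import Mathlib

section
/- Let f, g : [0,1] → [0,1] be continuous increasing functions with f(0)=g(0)=0 and f(1)=g(1)=1. Define H : [0,1]×[0,1] → [0,1] by H(s,t) = (1-t)·f(s) + t·g(s). Then for every w ∈ [0,1], the preimage H⁻¹({w}) is a connected subset of [0,1]×[0,1]. -/
open Set

/-- The straight-line homotopy between two continuous increasing self-maps of `[0,1]`
fixing the endpoints has connected point-preimages (within the unit square). -/
theorem straight_line_homotopy_fibers_connected
    (f g : ℝ → ℝ)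
    (hfc : ContinuousOn f (Icc 0 1)) (hgc : ContinuousOn g (Icc 0 1))
    (hfm : MonotoneOn f (Icc 0 1)) (hgm : MonotoneOn g (Icc 0 1))
    (hfmap : MapsTo f (Icc 0 1) (Icc 0 1)) (hgmap : MapsTo g (Icc 0 1) (Icc 0 1))
    (hf0 : f 0 = 0) (hf1 : f 1 = 1) (hg0 : g 0 = 0) (hg1 : g 1 = 1)
    (w : ℝ) (hw : w ∈ Icc (0:ℝ) 1) :
    IsPreconnected {p : ℝ × ℝ | p ∈ Icc (0:ℝ) 1 ×ˢ Icc (0:ℝ) 1 ∧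
      (1 - p.2) * f p.1 + p.2 * g p.1 = w} := by
  set F : Set (ℝ × ℝ) := {p : ℝ × ℝ | p ∈ Icc (0:ℝ) 1 ×ˢ Icc (0:ℝ) 1 ∧
      (1 - p.2) * f p.1 + p.2 * g p.1 = w} with hFdef
  have hmemF : ∀ r : ℝ × ℝ, r ∈ F ↔
      ((r.1 ∈ Icc (0:ℝ) 1 ∧ r.2 ∈ Icc (0:ℝ) 1) ∧ (1 - r.2) * f r.1 + r.2 * g r.1 = w) := by
    intro r; rw [hFdef]; exact Iff.rfl
  -- F is compact
  have hHc : ContinuousOn (fun p : ℝ × ℝ => (1 - p.2) * f p.1 + p.2 * g p.1)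
      (Icc (0:ℝ) 1 ×ˢ Icc (0:ℝ) 1) := by
    apply ContinuousOn.add
    · exact ((continuous_const.sub continuous_snd).continuousOn).mul
        (hfc.comp continuous_fst.continuousOn (fun p hp => hp.1))
    · exact (continuous_snd.continuousOn).mul
        (hgc.comp continuous_fst.continuousOn (fun p hp => hp.1))
  have hFclosed : IsClosed F := by
    have hEq : F = (Icc (0:ℝ) 1 ×ˢ Icc (0:ℝ) 1) ∩
        (fun p : ℝ × ℝ => (1 - p.2) * f p.1 + p.2 * g p.1) ⁻¹' {w} := by
      ext p
      simp only [hFdef, mem_setOf_eq, mem_inter_iff, mem_preimage, mem_singleton_iff]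
    rw [hEq]
    exact hHc.preimage_isClosed_of_isClosed (isClosed_Icc.prod isClosed_Icc) isClosed_singleton
  have hFcompact : IsCompact F :=
    (isCompact_Icc.prod isCompact_Icc).of_isClosed_subset hFclosed (fun p hp => hp.1)
  -- vertical sections
  set T : ℝ → Set ℝ := fun s => {t : ℝ | (s, t) ∈ F} with hTdef
  set L : ℝ → Set (ℝ × ℝ) := fun s => ({s} : Set ℝ) ×ˢ T s with hLdef
  have hmemL : ∀ s (r : ℝ × ℝ), r ∈ L s ↔ r.1 = s ∧ r ∈ F := by
    intro s r
    constructor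
    · rintro ⟨h1, h2⟩
      have h1' : r.1 = s := h1
      refine ⟨h1', ?_⟩
      have : (r.1, r.2) ∈ F := by rw [h1']; exact h2
      simpa using this
    · rintro ⟨h1, h2⟩
      refine ⟨h1, ?_⟩
      show (s, r.2) ∈ F
      rw [← h1]; simpa using h2
  -- each section is order-connected, hence preconnected
  have hTord : ∀ s, OrdConnected (T s) := by
    intro s
    constructor
    intro t₁ h₁ t₂ h₂ t ht
    rw [hTdef] at h₁ h₂
    simp only [mem_setOf_eq, hmemF] at h₁ h₂
    obtain ⟨⟨hs, ht₁⟩, e₁⟩ := h₁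
    obtain ⟨⟨-, ht₂⟩, e₂⟩ := h₂
    have htI : t ∈ Icc (0:ℝ) 1 := ⟨le_trans ht₁.1 ht.1, le_trans ht.2 ht₂.2⟩
    show (s, t) ∈ F
    rw [hmemF]
    refine ⟨⟨hs, htI⟩, ?_⟩
    rcases eq_or_ne t₁ t₂ with h | h
    · have hteq : t = t₁ := le_antisymm (h ▸ ht.2) ht.1
      rw [hteq]; exact e₁
    · have key : (t₂ - t₁) * (g s - f s) = 0 := by linear_combination e₂ - e₁
      have hd : g s - f s = 0 := by
        rcases mul_eq_zero.mp key with h' | h'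
        · exact absurd (sub_eq_zero.mp h').symm h
        · exact h'
      linear_combination e₁ + (t - t₁) * hd
  have hLpre : ∀ s, IsPreconnected (L s) := by
    intro s
    rw [hLdef]
    exact isPreconnected_singleton.prod (hTord s).isPreconnected
  -- monotonicity of the slices in s
  have hmono : ∀ t ∈ Icc (0:ℝ) 1,
      MonotoneOn (fun s => (1 - t) * f s + t * g s) (Icc (0:ℝ) 1) := by
    intro t ht a ha b hb hab
    have h1 : (1 - t) * f a ≤ (1 - t) * f b :=
      mul_le_mul_of_nonneg_left (hfm ha hb hab) (by linarith [ht.2])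
    have h2 : t * g a ≤ t * g b := mul_le_mul_of_nonneg_left (hgm ha hb hab) ht.1
    dsimp only
    linarith
  -- the projection of F is order-connected, hence preconnected
  have hSord : OrdConnected (Prod.fst '' F) := by
    constructor
    rintro s₁ ⟨⟨a, t₁⟩, hp₁, rfl⟩ s₂ ⟨⟨b, t₂⟩, hp₂, rfl⟩ s hs
    rw [hmemF] at hp₁ hp₂
    obtain ⟨⟨haI, ht₁⟩, e₁⟩ := hp₁
    obtain ⟨⟨hbI, ht₂⟩, e₂⟩ := hp₂
    simp only at e₁ e₂ hs ⊢
    have hsI : s ∈ Icc (0:ℝ) 1 := ⟨le_trans haI.1 hs.1, le_trans hs.2 hbI.2⟩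
    have hge : w ≤ (1 - t₁) * f s + t₁ * g s := by
      have := hmono t₁ ht₁ haI hsI hs.1
      dsimp only at this
      linarith
    have hle : (1 - t₂) * f s + t₂ * g s ≤ w := by
      have := hmono t₂ ht₂ hsI hbI hs.2
      dsimp only at this
      linarith
    have hφc : Continuous (fun t : ℝ => (1 - t) * f s + t * g s) := by
      exact ((continuous_const.sub continuous_id).mul continuous_const).add
        (continuous_id.mul continuous_const)
    have hIVT := intermediate_value_uIcc (a := t₂) (b := t₁)
      (f := fun t : ℝ => (1 - t) * f s + t * g s) hφc.continuousOn
    have hwmem : w ∈ uIcc ((1 - t₂) * f s + t₂ * g s) ((1 - t₁) * f s + t₁ * g s) := by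
      rw [mem_uIcc]; left; exact ⟨hle, hge⟩
    obtain ⟨t, htmem, hφt⟩ := hIVT hwmem
    have htI : t ∈ Icc (0:ℝ) 1 := by
      have hsub : uIcc t₂ t₁ ⊆ Icc (0:ℝ) 1 := by
        rw [uIcc]
        exact Icc_subset_Icc (le_inf ht₂.1 ht₁.1) (sup_le ht₂.2 ht₁.2)
      exact hsub htmem
    exact ⟨(s, t), (hmemF (s, t)).mpr ⟨⟨hsI, htI⟩, hφt⟩, rfl⟩
  have hSpre : IsPreconnected (Prod.fst '' F) := hSord.isPreconnected
  -- main argument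
  intro u v hu hv hcov hne1 hne2
  obtain ⟨p, hpF, hpu⟩ := hne1
  obtain ⟨q, hqF, hqv⟩ := hne2
  by_contra hempty
  have hempty' : ∀ r ∈ F, ¬(r ∈ u ∧ r ∈ v) := by
    intro r hr hc
    exact hempty ⟨r, hr, hc.1, hc.2⟩
  have hLsubF : ∀ s, L s ⊆ F := fun s r hr => ((hmemL s r).mp hr).2
  -- dichotomy for sections
  have hdich : ∀ s, L s ⊆ u ∨ L s ⊆ v := by
    intro s
    by_contra hc
    push_neg at hc
    obtain ⟨hcu, hcv⟩ := hc
    obtain ⟨r₁, hr₁L, hr₁u⟩ := not_subset.mp hcu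
    obtain ⟨r₂, hr₂L, hr₂v⟩ := not_subset.mp hcv
    have hr₁v : r₁ ∈ v := by
      rcases hcov (hLsubF s hr₁L) with h | h
      · exact absurd h hr₁u
      · exact h
    have hr₂u : r₂ ∈ u := by
      rcases hcov (hLsubF s hr₂L) with h | h
      · exact h
      · exact absurd h hr₂v
    obtain ⟨r, hrL, hru, hrv⟩ := hLpre s u v hu hv
      (fun x hx => hcov (hLsubF s hx)) ⟨r₂, hr₂L, hr₂u⟩ ⟨r₁, hr₁L, hr₁v⟩
    exact hempty' r (hLsubF s hrL) ⟨hru, hrv⟩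
  -- closed projections of the bad parts
  have hK₁ : IsClosed (Prod.fst '' (F ∩ uᶜ)) :=
    ((hFcompact.inter_right hu.isClosed_compl).image continuous_fst).isClosed
  have hK₂ : IsClosed (Prod.fst '' (F ∩ vᶜ)) :=
    ((hFcompact.inter_right hv.isClosed_compl).image continuous_fst).isClosed
  -- if the whole section over s lies in u, then s avoids the first bad projection
  have hsecu : ∀ s, L s ⊆ u → s ∉ Prod.fst '' (F ∩ uᶜ) := by
    rintro s hLu ⟨r, ⟨hrF, hru⟩, hr1⟩
    exact hru (hLu ((hmemL s r).mpr ⟨hr1, hrF⟩))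
  have hsecv : ∀ s, L s ⊆ v → s ∉ Prod.fst '' (F ∩ vᶜ) := by
    rintro s hLv ⟨r, ⟨hrF, hrv⟩, hr1⟩
    exact hrv (hLv ((hmemL s r).mpr ⟨hr1, hrF⟩))
  -- apply preconnectedness of the projection
  have hcov' : Prod.fst '' F ⊆ (Prod.fst '' (F ∩ uᶜ))ᶜ ∪ (Prod.fst '' (F ∩ vᶜ))ᶜ := by
    rintro s ⟨r, hrF, rfl⟩
    rcases hdich r.1 with h | h
    · exact Or.inl (hsecu r.1 h)
    · exact Or.inr (hsecv r.1 h)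
  have hne1' : (Prod.fst '' F ∩ (Prod.fst '' (F ∩ uᶜ))ᶜ).Nonempty := by
    refine ⟨p.1, ⟨p, hpF, rfl⟩, ?_⟩
    rcases hdich p.1 with h | h
    · exact hsecu p.1 h
    · exact absurd ⟨hpu, h ((hmemL p.1 p).mpr ⟨rfl, hpF⟩)⟩ (hempty' p hpF)
  have hne2' : (Prod.fst '' F ∩ (Prod.fst '' (F ∩ vᶜ))ᶜ).Nonempty := by
    refine ⟨q.1, ⟨q, hqF, rfl⟩, ?_⟩
    rcases hdich q.1 with h | h
    · exact absurd ⟨h ((hmemL q.1 q).mpr ⟨rfl, hqF⟩), hqv⟩ (hempty' q hqF)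
    · exact hsecv q.1 h
  obtain ⟨s, hsS, hs1, hs2⟩ := hSpre _ _ hK₁.isOpen_compl hK₂.isOpen_compl hcov' hne1' hne2'
  obtain ⟨r, hrF, hr1⟩ := hsS
  have hru : r ∈ u := by
    by_contra hru
    exact hs1 ⟨r, ⟨hrF, hru⟩, hr1⟩
  have hrv : r ∈ v := by
    by_contra hrv
    exact hs2 ⟨r, ⟨hrF, hrv⟩, hr1⟩
  exact hempty' r hrF ⟨hru, hrv⟩
end

section
/- Let X be a compact metric space, Y a Hausdorff topological space, f : X → Y a continuous surjective map such that the preimage of every point of Y is connected, and let T ⊆ Y be a closed connected set. Then f⁻¹(T) is connected. -/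
theorem IsClosedMap.isConnected_preimage {X Y : Type*} [TopologicalSpace X] [TopologicalSpace Y]
    {f : X → Y} (hf : Continuous f) (hcl : IsClosedMap f) (hsurj : Function.Surjective f)
    (hfib : ∀ y : Y, IsPreconnected (f ⁻¹' {y})) {T : Set Y} (hTclosed : IsClosed T)
    (hTconn : IsConnected T) : IsConnected (f ⁻¹' T) :=
  (hcl.isQuotientMap hf hsurj).isCoinducing.isConnected_preimage_of_isClosed
    (fun y ↦ ⟨hsurj y, hfib y⟩) hTclosed hTconn

/-- Preimages of closed connected sets under monotone continuous surjections of compact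
metric spaces onto Hausdorff spaces are connected (Whyburn). -/
theorem monotone_preimage_connected {X Y : Type*} [MetricSpace X] [CompactSpace X]
    [TopologicalSpace Y] [T2Space Y]
    (f : X → Y) (hf : Continuous f) (hsurj : Function.Surjective f)
    (hmono : ∀ y : Y, IsPreconnected (f ⁻¹' {y}))
    (T : Set Y) (hTclosed : IsClosed T) (hTconn : IsConnected T) :
    IsConnected (f ⁻¹' T) :=
  hf.isClosedMap.isConnected_preimage hf hsurj hmono hTclosed hTconn
end

section
/- Let f : S¹ → S¹ be a continuous monotone map of degree 1. Then f is the uniform limit of a sequence of orientation-preserving homeomorphisms of S¹. -/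
/-!
The lift `F` is nondecreasing: if `F b < F a` with `a < b < a + 2π`, pick a value `c` between
them with `exp c ≠ exp (F a), exp (F b)` (only countably many values are excluded). By the
intermediate value theorem the fibre of `f` over `exp c` meets both arcs `exp (a, b)` and
`exp (b, a + 2π)` but neither of their common endpoints, so it is disconnected.

The averages `Gₙ = (n F + id) / (n + 1)` are then strictly increasing degree-one lifts, hence lifts
of orientation-preserving homeomorphisms of the circle, and `F - Gₙ = (F - id) / (n + 1)` tends to
`0` uniformly because `F - id` is continuous and `2π`-periodic, hence bounded. Since `Circle.exp`
is `1`-Lipschitz, the homeomorphisms converge uniformly to `f`.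
-/

open Filter Real Set Function Topology

theorem TendstoUniformly.of_comp_surjective {ι α β γ : Type*} [UniformSpace β]
    {F : ι → α → β} {f : α → β} {p : Filter ι} {g : γ → α} (hg : Surjective g)
    (h : TendstoUniformly (fun i => F i ∘ g) (f ∘ g) p) : TendstoUniformly F f p := by
  intro u hu
  filter_upwards [h u hu] with i hi x
  obtain ⟨y, rfl⟩ := hg x
  exact hi y

namespace Circle

theorem isQuotientMap_exp : IsQuotientMap exp :=
  isCoveringMap_exp.isQuotientMap exp_surjective

theorem lipschitzWith_exp : LipschitzWith 1 exp := by
  refine LipschitzWith.of_dist_le_mul fun x y => ?_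
  have hsplit : (exp x : ℂ) - exp y = (Complex.exp (Complex.I * (x - y : ℝ)) - 1) * exp y := by
    rw [coe_exp, coe_exp, sub_mul, ← Complex.exp_add]
    push_cast
    ring_nf
  calc dist (exp x) (exp y) = ‖(exp x : ℂ) - exp y‖ := dist_eq_norm (exp x : ℂ) _
    _ = ‖Complex.exp (Complex.I * (x - y : ℝ)) - 1‖ := by rw [hsplit, norm_mul, norm_coe, mul_one]
    _ ≤ ‖x - y‖ := Real.norm_exp_I_mul_ofReal_sub_one_le
    _ = 1 * dist x y := by rw [one_mul, dist_eq_norm]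

theorem countable_preimage_exp_singleton (z : Circle) : (exp ⁻¹' {z}).Countable := by
  obtain ⟨t, rfl⟩ := exp_surjective z
  refine (countable_range fun k : ℤ => t + k * (2 * π)).mono fun s hs => ?_
  obtain ⟨k, hk⟩ := exp_eq_exp.1 hs
  exact ⟨k, hk.symm⟩

theorem disjoint_exp_image_Ioo {a b : ℝ} (hba : b < a + 2 * π) :
    Disjoint (exp '' Ioo a b) (exp '' Ioo b (a + 2 * π)) := by
  have hinj : InjOn exp (Ioc a (a + 2 * π)) := exp_injOn_Ioc (by linarith)
  refine disjoint_image_image fun s hs t ht => hinj.ne ?_ ?_ (hs.2.trans ht.1).ne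
  · exact ⟨hs.1, by linarith [hs.2]⟩
  · exact ⟨by linarith [hs.1, hs.2, ht.1], ht.2.le⟩

theorem subset_exp_image_Ioo_or_of_isPreconnected {S : Set Circle} (hS : IsPreconnected S)
    {a b : ℝ} (hba : b < a + 2 * π) (ha : exp a ∉ S) (hb : exp b ∉ S) :
    S ⊆ exp '' Ioo a b ∨ S ⊆ exp '' Ioo b (a + 2 * π) := by
  refine hS.subset_or_subset (isLocalHomeomorph_circleExp.isOpenMap _ isOpen_Ioo)
    (isLocalHomeomorph_circleExp.isOpenMap _ isOpen_Ioo) (disjoint_exp_image_Ioo hba) ?_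
  intro z hz
  obtain ⟨t, ht, rfl⟩ : z ∈ exp '' Ioc a (a + 2 * π) := by
    rw [periodic_exp.image_Ioc two_pi_pos, exp_surjective.range_eq]
    trivial
  have htb : t ≠ b := by rintro rfl; exact hb hz
  have hta : t ≠ a + 2 * π := by rintro rfl; exact ha (by rwa [exp_add_two_pi] at hz)
  rcases htb.lt_or_gt with h | h
  · exact Or.inl ⟨t, ⟨ht.1, h⟩, rfl⟩
  · exact Or.inr ⟨t, ⟨h, ht.2.lt_of_ne hta⟩, rfl⟩

end Circle

def IsDegreeOneLift (G : ℝ → ℝ) : Prop := ∀ t, G (t + 2 * π) = G t + 2 * π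

namespace IsDegreeOneLift

variable {G : ℝ → ℝ}

theorem periodic_sub_id (hG : IsDegreeOneLift G) : Periodic (fun t => G t - t) (2 * π) := by
  intro t
  simp only [hG t]
  ring

theorem map_add_int_mul (hG : IsDegreeOneLift G) (k : ℤ) (t : ℝ) :
    G (t + k * (2 * π)) = G t + k * (2 * π) := by
  have : G (t + k * (2 * π)) - (t + k * (2 * π)) = G t - t := hG.periodic_sub_id.int_mul k t
  linarith

theorem exists_abs_sub_le (hG : IsDegreeOneLift G) (hc : Continuous G) :
    ∃ M, ∀ t, |G t - t| ≤ M := by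
  obtain ⟨M, hM⟩ := (hG.periodic_sub_id.compact_of_continuous two_pi_pos.ne'
    (hc.sub continuous_id)).isBounded.exists_norm_le
  exact ⟨M, fun t => hM _ ⟨t, rfl⟩⟩

theorem surjective (hG : IsDegreeOneLift G) (hc : Continuous G) : Surjective G := by
  obtain ⟨M, hM⟩ := hG.exists_abs_sub_le hc
  refine hc.surjective ?_ ?_
  · refine tendsto_atTop_mono (fun t => ?_) (tendsto_atTop_add_const_right _ (-M) tendsto_id)
    linarith [abs_le.1 (hM t), id_eq t]
  · refine tendsto_atBot_mono (fun t => ?_) (tendsto_atBot_add_const_right _ M tendsto_id)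
    linarith [abs_le.1 (hM t), id_eq t]

theorem factorsThrough (hG : IsDegreeOneLift G) :
    FactorsThrough (fun t => Circle.exp (G t)) Circle.exp := by
  intro s t hst
  obtain ⟨k, rfl⟩ := Circle.exp_eq_exp.1 hst
  exact Circle.exp_eq_exp.2 ⟨k, hG.map_add_int_mul k t⟩

theorem exists_homeomorph_circle (hG : IsDegreeOneLift G) (hc : Continuous G)
    (hinj : Injective G) : ∃ h : Circle ≃ₜ Circle, ∀ t, h (Circle.exp t) = Circle.exp (G t) := by
  let expG : C(ℝ, Circle) := ⟨fun t => Circle.exp (G t), by fun_prop⟩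
  let g : C(Circle, Circle) := Circle.isQuotientMap_exp.lift expG hG.factorsThrough
  have hg (t : ℝ) : g (Circle.exp t) = Circle.exp (G t) :=
    DFunLike.congr_fun (Circle.isQuotientMap_exp.lift_comp expG hG.factorsThrough) t
  have hbij : Bijective g := by
    refine ⟨fun z w hzw => ?_, fun z => ?_⟩
    · obtain ⟨s, rfl⟩ := Circle.exp_surjective z
      obtain ⟨t, rfl⟩ := Circle.exp_surjective w
      obtain ⟨k, hk⟩ := Circle.exp_eq_exp.1 ((hg s).symm.trans (hzw.trans (hg t)))
      rw [← hG.map_add_int_mul] at hk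
      rw [hinj hk, Circle.exp_eq_exp]
      exact ⟨k, rfl⟩
    · obtain ⟨s, rfl⟩ := Circle.exp_surjective z
      obtain ⟨t, rfl⟩ := hG.surjective hc s
      exact ⟨_, hg t⟩
  exact ⟨Continuous.homeoOfEquivCompactToT2 (f := Equiv.ofBijective g hbij) g.continuous, hg⟩

theorem monotone_of_forall_le_of_lt_add (hG : IsDegreeOneLift G)
    (h : ∀ a b, a < b → b < a + 2 * π → G a ≤ G b) : Monotone G := by
  intro a b hab
  set a' := toIocMod two_pi_pos (b - 2 * π) a
  set k := toIocDiv two_pi_pos (b - 2 * π) a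
  have ha' : a' ∈ Ioc (b - 2 * π) b := by
    have := toIocMod_mem_Ioc two_pi_pos (b - 2 * π) a
    rwa [sub_add_cancel] at this
  have hsplit : a = a' + k * (2 * π) := by
    rw [← zsmul_eq_mul, toIocMod_add_toIocDiv_zsmul]
  have hk : (k : ℝ) * (2 * π) ≤ 0 := by
    have hk_lt : k < 1 := by
      have : (k : ℝ) * (2 * π) < 1 * (2 * π) := by linarith [ha'.1]
      exact_mod_cast lt_of_mul_lt_mul_right this two_pi_pos.le
    exact mul_nonpos_of_nonpos_of_nonneg (by exact_mod_cast (by omega : k ≤ 0)) two_pi_pos.le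
  have hGa' : G a' ≤ G b := by
    rcases ha'.2.lt_or_eq with hlt | heq
    · exact h a' b hlt (by linarith [ha'.1])
    · rw [heq]
  rw [hsplit, hG.map_add_int_mul]
  linarith

theorem monotone_of_isPreconnected_preimage (hG : IsDegreeOneLift G) (hc : Continuous G)
    {f : Circle → Circle} (hlift : ∀ t, f (Circle.exp t) = Circle.exp (G t))
    (hmono : ∀ w, IsPreconnected (f ⁻¹' {w})) : Monotone G := by
  refine hG.monotone_of_forall_le_of_lt_add fun a b hab hba => ?_
  by_contra! hlt
  have hbad : (Circle.exp ⁻¹' {Circle.exp (G a)} ∪ Circle.exp ⁻¹' {Circle.exp (G b)}).Countable :=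
    (Circle.countable_preimage_exp_singleton _).union (Circle.countable_preimage_exp_singleton _)
  obtain ⟨c, hcbad, hcG⟩ := (hbad.dense_compl ℝ).exists_between hlt
  simp only [mem_compl_iff, mem_union, mem_preimage, mem_singleton_iff, not_or] at hcbad
  have hfiber (t : ℝ) : Circle.exp t ∈ f ⁻¹' {Circle.exp c} ↔ Circle.exp (G t) = Circle.exp c := by
    simp [hlift]
  obtain ⟨t₁, ht₁, hGt₁⟩ := intermediate_value_Ioo' hab.le hc.continuousOn hcG
  obtain ⟨t₂, ht₂, hGt₂⟩ := intermediate_value_Ioo hba.le hc.continuousOn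
    (show c ∈ Ioo (G b) (G (a + 2 * π)) by rw [hG a]; exact ⟨hcG.1, by linarith [hcG.2, pi_pos]⟩)
  have hdisj := Circle.disjoint_exp_image_Ioo hba
  rcases Circle.subset_exp_image_Ioo_or_of_isPreconnected (hmono (Circle.exp c)) hba
    (fun h => hcbad.1 ((hfiber a).1 h).symm) (fun h => hcbad.2 ((hfiber b).1 h).symm) with hS | hS
  · exact disjoint_left.1 hdisj (hS ((hfiber t₂).2 (by rw [hGt₂]))) (mem_image_of_mem _ ht₂)
  · exact disjoint_left.1 hdisj (mem_image_of_mem _ ht₁) (hS ((hfiber t₁).2 (by rw [hGt₁])))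

end IsDegreeOneLift

noncomputable def averageWithId (G : ℝ → ℝ) (n : ℕ) (t : ℝ) : ℝ := (n * G t + t) / (n + 1)

section averageWithId

variable {G : ℝ → ℝ}

theorem IsDegreeOneLift.averageWithId (hG : IsDegreeOneLift G) (n : ℕ) :
    IsDegreeOneLift (averageWithId G n) := by
  intro t
  simp only [_root_.averageWithId, hG t]
  field_simp
  ring

theorem Continuous.averageWithId (hc : Continuous G) (n : ℕ) :
    Continuous (averageWithId G n) := by
  unfold _root_.averageWithId
  fun_prop

theorem Monotone.strictMono_averageWithId (hG : Monotone G) (n : ℕ) :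
    StrictMono (averageWithId G n) :=
  ((hG.const_mul (Nat.cast_nonneg n)).add_strictMono strictMono_id).div_const (by positivity)

theorem IsDegreeOneLift.tendstoUniformly_averageWithId (hG : IsDegreeOneLift G)
    (hc : Continuous G) : TendstoUniformly (_root_.averageWithId G) G atTop := by
  obtain ⟨M, hM⟩ := hG.exists_abs_sub_le hc
  have hlim : Tendsto (fun n : ℕ => M * (1 / ((n : ℝ) + 1))) atTop (𝓝 0) := by
    simpa using tendsto_one_div_add_atTop_nhds_zero_nat.const_mul M
  refine Metric.tendstoUniformly_iff.2 fun ε hε => ?_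
  filter_upwards [hlim.eventually (gt_mem_nhds hε)] with n hn t
  have hdiff : G t - _root_.averageWithId G n t = (G t - t) * (1 / (n + 1)) := by
    unfold _root_.averageWithId
    field_simp
    ring
  calc dist (G t) (_root_.averageWithId G n t) = |G t - t| * (1 / (n + 1)) := by
        rw [Real.dist_eq, hdiff, abs_mul, abs_of_pos (a := 1 / ((n : ℝ) + 1)) (by positivity)]
    _ ≤ M * (1 / (n + 1)) := by gcongr; exact hM t
    _ < ε := hn

end averageWithId

theorem monotone_degree_one_circle_map_uniform_limit_of_homeos_general
    (f : Circle → Circle)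
    (hmono : ∀ w : Circle, IsPreconnected (f ⁻¹' {w}))
    (F : ℝ → ℝ) (hF : Continuous F)
    (hlift : ∀ t : ℝ, f (Circle.exp t) = Circle.exp (F t))
    (hdeg : ∀ t : ℝ, F (t + 2 * Real.pi) = F t + 2 * Real.pi) :
    ∃ h : ℕ → (Circle ≃ₜ Circle),
      (∀ n, ∃ G : ℝ → ℝ, Continuous G ∧ StrictMono G ∧
        (∀ t : ℝ, h n (Circle.exp t) = Circle.exp (G t)) ∧
        (∀ t : ℝ, G (t + 2 * Real.pi) = G t + 2 * Real.pi)) ∧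
      TendstoUniformly (fun n => ⇑(h n)) f atTop := by
  have hFdeg : IsDegreeOneLift F := hdeg
  have hFmono : Monotone F := hFdeg.monotone_of_isPreconnected_preimage hF hlift hmono
  choose h hh using fun n => (hFdeg.averageWithId n).exists_homeomorph_circle
    (hF.averageWithId n) (hFmono.strictMono_averageWithId n).injective
  refine ⟨h, fun n => ⟨averageWithId F n, hF.averageWithId n, hFmono.strictMono_averageWithId n,
    hh n, hFdeg.averageWithId n⟩, ?_⟩
  refine TendstoUniformly.of_comp_surjective Circle.exp_surjective ?_
  have hlim := Circle.lipschitzWith_exp.uniformContinuous.comp_tendstoUniformly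
    (hFdeg.tendstoUniformly_averageWithId hF)
  simp only [comp_def, hh, hlift]
  exact hlim

/-- Youngs' theorem on the circle: a continuous monotone degree-one self-map of the circle
is the uniform limit of orientation-preserving homeomorphisms of the circle. Degree one is
expressed by a continuous lift `F` with `F (t + 2π) = F t + 2π`, and an orientation-preserving
homeomorphism by a strictly increasing continuous lift. -/
theorem monotone_degree_one_circle_map_uniform_limit_of_homeos
    (f : Circle → Circle) (hc : Continuous f)
    (hmono : ∀ w : Circle, IsPreconnected (f ⁻¹' {w}))
    (F : ℝ → ℝ) (hF : Continuous F)
    (hlift : ∀ t : ℝ, f (Circle.exp t) = Circle.exp (F t))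
    (hdeg : ∀ t : ℝ, F (t + 2 * Real.pi) = F t + 2 * Real.pi) :
    ∃ h : ℕ → (Circle ≃ₜ Circle),
      (∀ n, ∃ G : ℝ → ℝ, Continuous G ∧ StrictMono G ∧
        (∀ t : ℝ, h n (Circle.exp t) = Circle.exp (G t)) ∧
        (∀ t : ℝ, G (t + 2 * Real.pi) = G t + 2 * Real.pi)) ∧
      TendstoUniformly (fun n => ⇑(h n)) f atTop :=
  monotone_degree_one_circle_map_uniform_limit_of_homeos_general f hmono F hF hlift hdeg
end

section
/- Let f, g : S¹ → S¹ be monotone continuous maps that are homotopic. Then there exists a monotone homotopy H : S¹ × [0,1] → S¹ with H(·,0) = f and H(·,1) = g; that is, H is continuous, H⁻¹({w}) is connected for every w ∈ S¹, and H restricts to f and g on the two ends of the cylinder. -/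
/-!
Lift everything through `Circle.exp : ℝ → S¹`. A lift of the homotopy has a degree `d`:
shifting the argument by `2π` adds `2πd` at every stage. If a circle map `h` has connected fibres,
a lift `F` of `h` cannot change by more than `2π` over an interval of length `2π`: otherwise four
interleaved points would put a fibre of `h` on both sides of two points outside it, and the
circle minus two points is disconnected. Hence `|d| ≤ 1`; a lift of degree one is monotone,
and for degree zero the maps are constant.

For degree one, the linear interpolation of the lifts of `f` and `g` is monotone of degree one
at every stage, so it descends to a homotopy whose fibres have connected slices; by compactness of
the circle a closed set with connected slices is connected. Degree `-1` reduces to degree one by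
inverting the values, and two constant maps are joined along an arc shorter than a full turn.
-/

open Set unitInterval Function Topology
open scoped Real

/-- A *monotone* map in the sense of continuum theory. -/
def HasPreconnectedFibers {X Y : Type*} [TopologicalSpace X] (h : X → Y) : Prop :=
  ∀ y, IsPreconnected (h ⁻¹' {y})

theorem HasPreconnectedFibers.inv {X G : Type*} [TopologicalSpace X] [InvolutiveInv G]
    {h : X → G} (hh : HasPreconnectedFibers h) : HasPreconnectedFibers fun x => (h x)⁻¹ := by
  intro y
  convert hh y⁻¹ using 1
  ext x
  simp [inv_eq_iff_eq_inv]

theorem IsClosed.isPreconnected_of_isConnected_slices {X Y : Type*} [TopologicalSpace X]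
    [TopologicalSpace Y] [CompactSpace X] [ConnectedSpace Y] {S : Set (X × Y)} (hS : IsClosed S)
    (hslice : ∀ y, IsConnected {x | (x, y) ∈ S}) : IsPreconnected S := by
  let p : S → Y := fun q => q.1.2
  have hp : IsQuotientMap p :=
    (isClosedMap_snd_of_compactSpace.comp hS.isClosedMap_subtype_val).isQuotientMap
      (by fun_prop) fun y => let ⟨x, hx⟩ := (hslice y).nonempty; ⟨⟨(x, y), hx⟩, rfl⟩
  have hfiber : ∀ y, IsConnected (p ⁻¹' {y}) := by
    intro y
    have himage : Subtype.val '' (p ⁻¹' {y}) = (fun x => (x, y)) '' {x | (x, y) ∈ S} := by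
      ext ⟨x, y'⟩
      aesop
    have hconn := (hslice y).image _ (Continuous.prodMk_left y).continuousOn
    rw [← himage] at hconn
    exact ⟨hconn.nonempty.of_image, IsInducing.subtypeVal.isPreconnected_image.1 hconn.2⟩
  have := hp.isCoinducing.isConnected_preimage_of_isClosed hfiber isClosed_univ isConnected_univ
  rw [preimage_univ, ← connectedSpace_iff_univ, ← isConnected_iff_connectedSpace] at this
  exact this.isPreconnected

namespace Circle

theorem exp_ne_exp_of_lt_of_lt {a b : ℝ} (hab : a < b) (hba : b < a + 2 * π) :
    exp a ≠ exp b :=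
  (exp_injOn_Ico (b := a + 2 * π) (by linarith)).ne ⟨le_rfl, by linarith [Real.pi_pos]⟩
    ⟨hab.le, hba⟩ hab.ne

theorem exists_exp_eq_of_mem_Ico (z : Circle) (a : ℝ) : ∃ x ∈ Ico a (a + 2 * π), exp x = z := by
  obtain ⟨x, hx, hz⟩ := periodic_exp.exists_mem_Ico Real.two_pi_pos (Complex.arg z) a
  exact ⟨x, hx, by rw [← hz, exp_arg]⟩

theorem exp_mem_or_exp_mem_of_isPreconnected {S : Set Circle} (hS : IsPreconnected S)
    {s u s' u' : ℝ} (hsu : s < u) (hus' : u < s') (hs'u' : s' < u') (hu's : u' < s + 2 * π)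
    (hu : exp u ∈ S) (hu' : exp u' ∈ S) : exp s ∈ S ∨ exp s' ∈ S := by
  by_contra! hs
  have hcover : S ⊆ exp '' Ioo s s' ∪ exp '' Ioo s' (s + 2 * π) := by
    intro z hz
    obtain ⟨r, hr, rfl⟩ := exists_exp_eq_of_mem_Ico z s
    have hrs : s < r := hr.1.lt_of_ne (by rintro rfl; exact hs.1 hz)
    rcases lt_trichotomy r s' with hrs' | rfl | hrs'
    · exact Or.inl ⟨r, ⟨hrs, hrs'⟩, rfl⟩
    · exact absurd hz hs.2
    · exact Or.inr ⟨r, ⟨hrs', hr.2⟩, rfl⟩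
  obtain ⟨_, -, ⟨a, ha, rfl⟩, b, hb, hab⟩ := hS _ _
    (isLocalHomeomorph_circleExp.isOpenMap _ isOpen_Ioo)
    (isLocalHomeomorph_circleExp.isOpenMap _ isOpen_Ioo) hcover
    ⟨exp u, hu, u, ⟨hsu, hus'⟩, rfl⟩ ⟨exp u', hu', u', ⟨hs'u', hu's⟩, rfl⟩
  have := exp_injOn_Ico (a := s) (b := s + 2 * π) (by linarith)
    ⟨hb.1.le.trans' (hsu.le.trans hus'.le), hb.2⟩ ⟨ha.1.le, ha.2.trans (by linarith)⟩ hab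
  linarith [ha.2, hb.1]

theorem exists_int_eq_add_of_exp_eq {A : Type*} [TopologicalSpace A] [PreconnectedSpace A]
    [Nonempty A] {L₁ L₂ : A → ℝ} (h₁ : Continuous L₁) (h₂ : Continuous L₂)
    (h : ∀ a, exp (L₁ a) = exp (L₂ a)) : ∃ d : ℤ, ∀ a, L₁ a = L₂ a + d * (2 * π) := by
  obtain ⟨a₀⟩ := ‹Nonempty A›
  obtain ⟨d, hd⟩ := exp_eq_exp.1 (h a₀)
  refine ⟨d, congr_fun (isCoveringMap_exp.eq_of_comp_eq h₁ (h₂.add continuous_const)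
    (funext fun a => ?_) a₀ hd)⟩
  simp [h a, exp_add]

theorem exists_lift_of_homotopy {K : Circle × I → Circle} (hK : Continuous K) :
    ∃ L : ℝ × I → ℝ, Continuous L ∧ (∀ x t, exp (L (x, t)) = K (exp x, t)) ∧
      ∃ d : ℤ, ∀ x t, L (x + 2 * π, t) = L (x, t) + d * (2 * π) := by
  -- `ℝ × ℝ` is simply connected, so the homotopy is extended to it before lifting.
  let K' : C(ℝ × ℝ, Circle) := ⟨fun p => K (exp p.1, projIcc 0 1 zero_le_one p.2), by fun_prop⟩
  obtain ⟨L, -, hL⟩ := (isCoveringMap_exp.existsUnique_continuousMap_lifts K' 0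
    (Complex.arg (K' 0)) (exp_arg _)).exists
  have hLK : ∀ p, exp (L p) = K' p := congr_fun hL
  obtain ⟨d, hd⟩ := exists_int_eq_add_of_exp_eq
    (L.continuous.comp (by fun_prop : Continuous fun p : ℝ × ℝ => (p.1 + 2 * π, p.2)))
    L.continuous fun p => by simp [hLK, K']
  exact ⟨fun p => L (p.1, p.2), by fun_prop, fun x t => by simp [hLK, K'], d,
    fun x t => hd (x, t)⟩

theorem exists_continuous_comp_exp_prod {Y Z : Type*} [TopologicalSpace Y] [TopologicalSpace Z]
    {φ : ℝ × Y → Z} (hφ : Continuous φ) (hper : ∀ x y, φ (x + 2 * π, y) = φ (x, y)) :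
    ∃ H : Circle × Y → Z, Continuous H ∧ ∀ x y, H (exp x, y) = φ (x, y) := by
  have harg : ∀ x y, φ (Complex.arg (exp x), y) = φ (x, y) := by
    intro x y
    obtain ⟨m, hm⟩ := exp_eq_exp.1 (exp_arg (exp x))
    rw [hm]
    exact (Periodic.int_mul (f := fun x => φ (x, y)) (fun x => hper x y) m) x
  have hq : IsQuotientMap (Prod.map exp id : ℝ × Y → Circle × Y) :=
    (isLocalHomeomorph_circleExp.isOpenMap.prodMap IsOpenMap.id).isQuotientMap (by fun_prop)
      (exp_surjective.prodMap surjective_id)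
  refine ⟨fun p => φ (Complex.arg p.1, p.2), ?_, harg⟩
  rw [hq.continuous_iff]
  convert hφ using 1
  funext p
  exact harg p.1 p.2

section Lift

variable {h : Circle → Circle} {F : ℝ → ℝ}

theorem exp_lift_eq_or_of_interleaved (hh : HasPreconnectedFibers h)
    (hF : ∀ x, exp (F x) = h (exp x)) {x₁ x₂ x₃ x₄ : ℝ} (h₁₂ : x₁ < x₂) (h₂₃ : x₂ < x₃)
    (h₃₄ : x₃ < x₄) (h₄₁ : x₄ < x₁ + 2 * π) (h₂₄ : exp (F x₂) = exp (F x₄)) :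
    exp (F x₁) = exp (F x₂) ∨ exp (F x₃) = exp (F x₂) := by
  simp only [hF] at h₂₄ ⊢
  exact exp_mem_or_exp_mem_of_isPreconnected (hh _) h₁₂ h₂₃ h₃₄ h₄₁ rfl h₂₄.symm

theorem lift_sub_le_two_pi (hh : HasPreconnectedFibers h) (hFc : Continuous F)
    (hF : ∀ x, exp (F x) = h (exp x)) {a b : ℝ} (hab : a ≤ b) (hba : b ≤ a + 2 * π) :
    F b - F a ≤ 2 * π := by
  by_contra! hlt
  set δ := min ((F b - F a - 2 * π) / 2) π
  have hδ : 0 < δ := lt_min (by linarith) Real.pi_pos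
  have hδπ : δ ≤ π := min_le_right _ _
  have hδb : F a + δ + 2 * π < F b := by linarith [min_le_left ((F b - F a - 2 * π) / 2) π]
  obtain ⟨x₂, hx₂, hFx₂⟩ := intermediate_value_Ioo hab hFc.continuousOn
    (show F a + δ ∈ Ioo (F a) (F b) by constructor <;> linarith)
  obtain ⟨x₄, hx₄, hFx₄⟩ := intermediate_value_Ioo hx₂.2.le hFc.continuousOn
    (show F a + δ + 2 * π ∈ Ioo (F x₂) (F b) by constructor <;> linarith)
  obtain ⟨x₁, hx₁, hFx₁⟩ := intermediate_value_Ioo hx₂.1.le hFc.continuousOn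
    (show F a + δ / 2 ∈ Ioo (F a) (F x₂) by constructor <;> linarith)
  obtain ⟨x₃, hx₃, hFx₃⟩ := intermediate_value_Ioo hx₄.1.le hFc.continuousOn
    (show F a + δ + π ∈ Ioo (F x₂) (F x₄) by constructor <;> linarith [Real.pi_pos])
  rcases exp_lift_eq_or_of_interleaved hh hF hx₁.2 hx₃.1 hx₃.2 (by linarith [hx₁.1, hx₄.2])
      (by rw [hFx₂, hFx₄, exp_add_two_pi]) with h | h <;> rw [hFx₂] at h
  · rw [hFx₁] at h
    exact exp_ne_exp_of_lt_of_lt (by linarith) (by linarith) h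
  · rw [hFx₃] at h
    exact exp_ne_exp_of_lt_of_lt (by linarith) (by linarith [Real.pi_pos]) h.symm

theorem abs_lift_sub_le_two_pi (hh : HasPreconnectedFibers h) (hFc : Continuous F)
    (hF : ∀ x, exp (F x) = h (exp x)) {a b : ℝ} (hab : a ≤ b) (hba : b ≤ a + 2 * π) :
    |F b - F a| ≤ 2 * π := by
  have hneg := lift_sub_le_two_pi hh.inv hFc.neg (F := fun x => -F x)
    (fun x => by rw [exp_neg, hF]) hab hba
  exact abs_sub_le_iff.2 ⟨lift_sub_le_two_pi hh hFc hF hab hba, by linarith⟩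

theorem abs_le_one_of_lift_add_two_pi (hh : HasPreconnectedFibers h) (hFc : Continuous F)
    (hF : ∀ x, exp (F x) = h (exp x)) {d : ℤ} (hd : ∀ x, F (x + 2 * π) = F x + d * (2 * π)) :
    |d| ≤ 1 := by
  have hbound := abs_lift_sub_le_two_pi hh hFc hF (a := 0) (b := 2 * π) Real.two_pi_pos.le
    (by simp)
  have hshift := hd 0
  rw [zero_add] at hshift
  rw [hshift, add_sub_cancel_left, abs_mul, abs_of_pos Real.two_pi_pos] at hbound
  have hd1 : |(d : ℝ)| ≤ 1 := le_of_mul_le_mul_right (by linarith) Real.two_pi_pos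
  exact_mod_cast hd1

theorem monotone_of_lift_add_two_pi (hh : HasPreconnectedFibers h) (hFc : Continuous F)
    (hF : ∀ x, exp (F x) = h (exp x)) (hd : ∀ x, F (x + 2 * π) = F x + 2 * π) : Monotone F := by
  let F' : AddConstMap ℝ ℝ (2 * π) (2 * π) := ⟨F, hd⟩
  refine (AddConstMapClass.monotone_iff_Icc (f := F') Real.two_pi_pos 0).2
    fun a ha b hb hab => ?_
  have := lift_sub_le_two_pi hh hFc hF (a := b) (b := a + 2 * π) (by linarith [hb.2, ha.1])
    (by linarith)
  change F a ≤ F b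
  rw [hd] at this
  linarith

theorem apply_eq_apply_one_of_lift_periodic (hh : HasPreconnectedFibers h) (hFc : Continuous F)
    (hF : ∀ x, exp (F x) = h (exp x)) (hper : Periodic F (2 * π)) (z : Circle) : h z = h 1 := by
  suffices hconst : ∀ a b, F a = F b by
    rw [← exp_arg z, ← exp_zero, ← hF, ← hF, hconst]
  intro a b
  wlog hlt : F a < F b generalizing a b
  · rcases (not_lt.1 hlt).lt_or_eq with h | h
    exacts [(this b a h).symm, h.symm]
  exfalso
  obtain ⟨b', hb', hFb'⟩ := hper.exists_mem_Ico Real.two_pi_pos b a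
  rw [hFb'] at hlt
  have hab' : a < b' := hb'.1.lt_of_ne (by rintro rfl; exact hlt.false)
  have hbound := lift_sub_le_two_pi hh hFc hF hb'.1 hb'.2.le
  set y := (F a + F b') / 2 with hy
  obtain ⟨x₂, hx₂, hFx₂⟩ := intermediate_value_Ioo hab'.le hFc.continuousOn
    (show y ∈ Ioo (F a) (F b') by constructor <;> linarith)
  obtain ⟨x₄, hx₄, hFx₄⟩ := intermediate_value_Ioo' hb'.2.le hFc.continuousOn
    (show y ∈ Ioo (F (a + 2 * π)) (F b') by rw [hper]; constructor <;> linarith)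
  rcases exp_lift_eq_or_of_interleaved hh hF hx₂.1 hx₂.2 hx₄.1 hx₄.2
      (by rw [hFx₂, hFx₄]) with h | h <;> rw [hFx₂] at h
  · exact exp_ne_exp_of_lt_of_lt (by linarith) (by linarith [Real.pi_pos]) h
  · exact exp_ne_exp_of_lt_of_lt (by linarith) (by linarith [Real.pi_pos]) h.symm

theorem isConnected_preimage_singleton_of_monotone_lift (hFc : Continuous F) (hFm : Monotone F)
    (hF : ∀ x, exp (F x) = h (exp x)) (hd : ∀ x, F (x + 2 * π) = F x + 2 * π) (w : Circle) :
    IsConnected (h ⁻¹' {w}) := by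
  obtain ⟨y, hy, rfl⟩ := exists_exp_eq_of_mem_Ico w (F 0)
  let F' : AddConstMap ℝ ℝ (2 * π) (2 * π) := ⟨F, hd⟩
  have hfiber : h ⁻¹' {exp y} = exp '' (F ⁻¹' {y}) := by
    ext z
    constructor
    · intro hz
      obtain ⟨m, hm⟩ := exp_eq_exp.1 ((hF _).trans ((congrArg h (exp_arg z)).trans hz))
      refine ⟨Complex.arg z + (-m) • (2 * π), ?_, ?_⟩
      · have := AddConstMapClass.map_add_zsmul F' (Complex.arg z) (-m)
        simp only [F', AddConstMap.coe_mk] at this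
        rw [mem_preimage, this, hm]
        simp
      · rw [zsmul_eq_mul, exp_add, exp_int_mul_two_pi, mul_one, exp_arg]
    · rintro ⟨x, hx, rfl⟩
      exact (hF x).symm.trans (congrArg exp hx)
  rw [hfiber]
  obtain ⟨x, -, hx⟩ := intermediate_value_Icc Real.two_pi_pos.le hFc.continuousOn
    (show y ∈ Icc (F 0) (F (2 * π)) by rw [← zero_add (2 * π), hd]; exact ⟨hy.1, hy.2.le⟩)
  exact (show IsConnected (F ⁻¹' {y}) from
    ⟨⟨x, hx⟩, (ordConnected_singleton.preimage_mono hFm).isPreconnected⟩).image _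
    exp.continuous.continuousOn

end Lift

def IsMonotoneHomotopy (f g : Circle → Circle) (H : Circle × I → Circle) : Prop :=
  Continuous H ∧ (∀ z, H (z, 0) = f z) ∧ (∀ z, H (z, 1) = g z) ∧ HasPreconnectedFibers H

theorem IsMonotoneHomotopy.inv {f g : Circle → Circle} {H : Circle × I → Circle}
    (hH : IsMonotoneHomotopy f g H) :
    IsMonotoneHomotopy (fun z => (f z)⁻¹) (fun z => (g z)⁻¹) fun p => (H p)⁻¹ :=
  ⟨hH.1.inv, fun z => congrArg (·⁻¹) (hH.2.1 z), fun z => congrArg (·⁻¹) (hH.2.2.1 z),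
    hH.2.2.2.inv⟩

theorem exists_isMonotoneHomotopy_const (a b : Circle) :
    ∃ H, IsMonotoneHomotopy (fun _ => a) (fun _ => b) H := by
  set α := Complex.arg a
  obtain ⟨β, hβ, rfl⟩ := exists_exp_eq_of_mem_Ico b α
  have hαβ : 0 ≤ β - α := by linarith [hβ.1]
  let ℓ : I → ℝ := fun t => α + t * (β - α)
  have hℓm : Monotone ℓ := fun s t hst => by
    simp only [ℓ]
    gcongr
  have hℓ : ∀ t, ℓ t ∈ Ico α (α + 2 * π) := fun t => by
    constructor <;> nlinarith [t.2.1, t.2.2, hβ.2]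
  refine ⟨fun p => exp (ℓ p.2), by fun_prop, fun z => by simp [ℓ, α, exp_arg],
    fun z => by simp [ℓ], fun w => ?_⟩
  have hfiber : (fun p : Circle × I => exp (ℓ p.2)) ⁻¹' {w} = univ ×ˢ {t | exp (ℓ t) = w} := by
    ext; simp
  rw [hfiber]
  refine isPreconnected_univ.prod (OrdConnected.isPreconnected ⟨fun s hs t ht u hu => ?_⟩)
  have hst : ℓ s = ℓ t :=
    exp_injOn_Ico (by linarith) (hℓ s) (hℓ t) (hs.trans ht.symm)
  have hu' : ℓ u = ℓ s := le_antisymm (hst ▸ hℓm hu.2) (hℓm hu.1)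
  exact (congrArg exp hu').trans hs

theorem exists_isMonotoneHomotopy_of_monotone_lifts {f g : Circle → Circle} {F G : ℝ → ℝ}
    (hFc : Continuous F) (hGc : Continuous G) (hFm : Monotone F) (hGm : Monotone G)
    (hF : ∀ x, exp (F x) = f (exp x)) (hG : ∀ x, exp (G x) = g (exp x))
    (hFd : ∀ x, F (x + 2 * π) = F x + 2 * π) (hGd : ∀ x, G (x + 2 * π) = G x + 2 * π) :
    ∃ H, IsMonotoneHomotopy f g H := by
  let M : ℝ × I → ℝ := fun p => (1 - p.2) * F p.1 + p.2 * G p.1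
  have hMd : ∀ x t, M (x + 2 * π, t) = M (x, t) + 2 * π := fun x t => by
    simp only [M, hFd, hGd]
    ring
  have hMm : ∀ t : I, Monotone fun x => M (x, t) := fun t =>
    (hFm.const_mul (sub_nonneg.2 t.2.2)).add (hGm.const_mul t.2.1)
  obtain ⟨H, hHc, hH⟩ := exists_continuous_comp_exp_prod (φ := fun p => exp (M p))
    (by fun_prop) fun x t => by simp only [hMd, exp_add_two_pi]
  refine ⟨H, hHc, fun z => ?_, fun z => ?_, fun w => ?_⟩
  · rw [← exp_arg z, hH]
    simp [M, hF]
  · rw [← exp_arg z, hH]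
    simp [M, hG]
  · refine (isClosed_singleton.preimage hHc).isPreconnected_of_isConnected_slices fun t => ?_
    exact isConnected_preimage_singleton_of_monotone_lift (h := fun z => H (z, t))
      (F := fun x => M (x, t)) (by fun_prop) (hMm t) (fun x => (hH x t).symm) (fun x => hMd x t) w

theorem exists_isMonotoneHomotopy_of_lifts {f g : Circle → Circle} {F G : ℝ → ℝ}
    (hf : HasPreconnectedFibers f) (hg : HasPreconnectedFibers g)
    (hFc : Continuous F) (hGc : Continuous G)
    (hF : ∀ x, exp (F x) = f (exp x)) (hG : ∀ x, exp (G x) = g (exp x))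
    (hFd : ∀ x, F (x + 2 * π) = F x + 2 * π) (hGd : ∀ x, G (x + 2 * π) = G x + 2 * π) :
    ∃ H, IsMonotoneHomotopy f g H :=
  exists_isMonotoneHomotopy_of_monotone_lifts hFc hGc (monotone_of_lift_add_two_pi hf hFc hF hFd)
    (monotone_of_lift_add_two_pi hg hGc hG hGd) hF hG hFd hGd

end Circle

open Circle in
theorem monotone_homotopy_between_monotone_circle_maps_general
    (f g : Circle → Circle)
    (hfm : ∀ w : Circle, IsPreconnected (f ⁻¹' {w}))
    (hgm : ∀ w : Circle, IsPreconnected (g ⁻¹' {w}))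
    (hhom : ∃ K : Circle × unitInterval → Circle, Continuous K ∧
      (∀ z, K (z, 0) = f z) ∧ (∀ z, K (z, 1) = g z)) :
    ∃ H : Circle × unitInterval → Circle, Continuous H ∧
      (∀ z, H (z, 0) = f z) ∧ (∀ z, H (z, 1) = g z) ∧
      (∀ w : Circle, IsPreconnected (H ⁻¹' {w})) := by
  obtain ⟨K, hKc, hK0, hK1⟩ := hhom
  obtain ⟨L, hLc, hLK, d, hLd⟩ := exists_lift_of_homotopy hKc
  have hF : ∀ x, exp (L (x, 0)) = f (exp x) := fun x => (hLK x 0).trans (hK0 _)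
  have hG : ∀ x, exp (L (x, 1)) = g (exp x) := fun x => (hLK x 1).trans (hK1 _)
  have hd := abs_le_one_of_lift_add_two_pi hfm (by fun_prop) hF fun x => hLd x 0
  obtain rfl | rfl | rfl : d = -1 ∨ d = 0 ∨ d = 1 := by rw [abs_le] at hd; omega
  · obtain ⟨H, hH⟩ := exists_isMonotoneHomotopy_of_lifts (f := fun z => (f z)⁻¹)
      (g := fun z => (g z)⁻¹) (F := fun x => -L (x, 0)) (G := fun x => -L (x, 1))
      (HasPreconnectedFibers.inv hfm) (HasPreconnectedFibers.inv hgm) (by fun_prop) (by fun_prop)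
      (fun x => by rw [exp_neg, hF]) (fun x => by rw [exp_neg, hG])
      (fun x => by rw [hLd]; push_cast; ring) (fun x => by rw [hLd]; push_cast; ring)
    have hH' := hH.inv
    simp only [inv_inv] at hH'
    exact ⟨_, hH'⟩
  · obtain ⟨H, hH⟩ := exists_isMonotoneHomotopy_const (f 1) (g 1)
    have hf := apply_eq_apply_one_of_lift_periodic hfm (by fun_prop) hF fun x => by simp [hLd]
    have hg := apply_eq_apply_one_of_lift_periodic hgm (by fun_prop) hG fun x => by simp [hLd]
    exact ⟨H, hH.1, fun z => (hH.2.1 z).trans (hf z).symm, fun z => (hH.2.2.1 z).trans (hg z).symm,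
      hH.2.2.2⟩
  · exact exists_isMonotoneHomotopy_of_lifts hfm hgm (by fun_prop) (by fun_prop) hF hG
      (fun x => by simp [hLd]) (fun x => by simp [hLd])

/-- Two homotopic monotone continuous self-maps of the circle are joined by a monotone
homotopy on the cylinder `S¹ × [0,1]`: a continuous homotopy all of whose point-preimages
are connected. -/
theorem monotone_homotopy_between_monotone_circle_maps
    (f g : Circle → Circle) (hfc : Continuous f) (hgc : Continuous g)
    (hfm : ∀ w : Circle, IsPreconnected (f ⁻¹' {w}))
    (hgm : ∀ w : Circle, IsPreconnected (g ⁻¹' {w}))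
    (hhom : ∃ K : Circle × unitInterval → Circle, Continuous K ∧
      (∀ z, K (z, 0) = f z) ∧ (∀ z, K (z, 1) = g z)) :
    ∃ H : Circle × unitInterval → Circle, Continuous H ∧
      (∀ z, H (z, 0) = f z) ∧ (∀ z, H (z, 1) = g z) ∧
      (∀ w : Circle, IsPreconnected (H ⁻¹' {w})) :=
  monotone_homotopy_between_monotone_circle_maps_general f g hfm hgm hhom
end

section
/- Let φ : [0,1] → [0,1] be continuous, nondecreasing, surjective. Define H̃ : [0,1]² → [0,1] by H̃(s,t) = (1−t)·s + t·φ(s) (straight-line homotopy from the identity to φ). Then H̃ is continuous and for every w ∈ [0,1] the fiber H̃⁻¹({w}) is a compact connected set. -/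
open Set

/-- For a continuous nondecreasing surjection `φ` of `[0,1]`, the straight-line homotopy
`H̃(s,t) = (1-t)s + t·φ(s)` from the identity to `φ` is continuous on the unit square and
all its fibers are compact and connected. -/
theorem straight_line_homotopy_from_identity_fibers
    (φ : ℝ → ℝ) (hc : ContinuousOn φ (Icc 0 1)) (hm : MonotoneOn φ (Icc 0 1))
    (hmap : MapsTo φ (Icc 0 1) (Icc 0 1)) (hsurj : SurjOn φ (Icc 0 1) (Icc 0 1)) :
    ContinuousOn (fun p : ℝ × ℝ => (1 - p.2) * p.1 + p.2 * φ p.1)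
      (Icc (0:ℝ) 1 ×ˢ Icc (0:ℝ) 1) ∧
    ∀ w ∈ Icc (0:ℝ) 1,
      IsCompact {p : ℝ × ℝ | p ∈ Icc (0:ℝ) 1 ×ˢ Icc (0:ℝ) 1 ∧
        (1 - p.2) * p.1 + p.2 * φ p.1 = w} ∧
      IsConnected {p : ℝ × ℝ | p ∈ Icc (0:ℝ) 1 ×ˢ Icc (0:ℝ) 1 ∧
        (1 - p.2) * p.1 + p.2 * φ p.1 = w} := by
  have h01 : (0:ℝ) ∈ Icc (0:ℝ) 1 := ⟨le_refl 0, zero_le_one⟩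
  have h11 : (1:ℝ) ∈ Icc (0:ℝ) 1 := ⟨zero_le_one, le_refl 1⟩
  -- boundary values
  have hφ0 : φ 0 = 0 := by
    obtain ⟨x, hx, hx0⟩ := hsurj h01
    have h1 := hm h01 hx hx.1
    have h2 := (hmap h01).1
    linarith
  have hφ1 : φ 1 = 1 := by
    obtain ⟨x, hx, hx1⟩ := hsurj h11
    have h1 := hm hx h11 hx.2
    have h2 := (hmap h11).2
    linarith
  set K : Set (ℝ × ℝ) := Icc (0:ℝ) 1 ×ˢ Icc (0:ℝ) 1 with hK
  set f : ℝ × ℝ → ℝ := fun p => (1 - p.2) * p.1 + p.2 * φ p.1 with hf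
  have hKc : IsCompact K := isCompact_Icc.prod isCompact_Icc
  have hKcl : IsClosed K := isClosed_Icc.prod isClosed_Icc
  have hcont : ContinuousOn f K := by
    apply ContinuousOn.add
    · exact (Continuous.mul (by continuity) continuous_fst).continuousOn
    · exact continuous_snd.continuousOn.mul
        (hc.comp continuous_fst.continuousOn (fun p hp => hp.1))
  refine ⟨hcont, fun w hw => ?_⟩
  have hFeq : {p : ℝ × ℝ | p ∈ Icc (0:ℝ) 1 ×ˢ Icc (0:ℝ) 1 ∧
      (1 - p.2) * p.1 + p.2 * φ p.1 = w} = K ∩ f ⁻¹' {w} := by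
    ext p
    simp only [mem_setOf_eq, mem_inter_iff, mem_preimage, mem_singleton_iff, hK, hf]
  rw [hFeq]
  set F : Set (ℝ × ℝ) := K ∩ f ⁻¹' {w} with hFdef
  have hFcl : IsClosed F := hcont.preimage_isClosed_of_isClosed hKcl isClosed_singleton
  have hFcompact : IsCompact F := hKc.of_isClosed_subset hFcl inter_subset_left
  refine ⟨hFcompact, ?_, ?_⟩
  · -- nonempty: (w, 0)
    refine ⟨(w, 0), ⟨⟨hw, h01⟩, ?_⟩⟩
    simp [hf]
  · -- preconnected
    -- slice data: for each t ∈ [0,1], the slice map is monotone and the slice is nonempty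
    have hmono : ∀ t ∈ Icc (0:ℝ) 1, MonotoneOn (fun s => f (s, t)) (Icc 0 1) := by
      intro t ht a ha b hb hab
      have h1 : (1 - t) * a ≤ (1 - t) * b :=
        mul_le_mul_of_nonneg_left hab (by linarith [ht.2])
      have h2 : t * φ a ≤ t * φ b :=
        mul_le_mul_of_nonneg_left (hm ha hb hab) ht.1
      simpa [hf] using add_le_add h1 h2
    have hslice_ne : ∀ t ∈ Icc (0:ℝ) 1, ∃ s ∈ Icc (0:ℝ) 1, f (s, t) = w := by
      intro t ht
      have hgc : ContinuousOn (fun s => f (s, t)) (Icc 0 1) := by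
        have heq : (fun s => f (s, t)) = fun s : ℝ => (1 - t) * s + t * φ s := rfl
        rw [heq]
        exact (continuousOn_const.mul continuousOn_id).add (continuousOn_const.mul hc)
      have h0v : f ((0:ℝ), t) = 0 := by simp [hf, hφ0]
      have h1v : f ((1:ℝ), t) = 1 := by simp [hf, hφ1]
      have hiv := intermediate_value_Icc (zero_le_one) hgc
      rw [h0v, h1v] at hiv
      obtain ⟨s, hs, hsv⟩ := hiv hw
      exact ⟨s, hs, hsv⟩
    -- slices (as subsets of the plane) are preconnected
    have hslice_conn : ∀ t ∈ Icc (0:ℝ) 1,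
        IsPreconnected ((fun s => (s, t)) '' {s | s ∈ Icc (0:ℝ) 1 ∧ f (s, t) = w}) := by
      intro t ht
      apply IsPreconnected.image _ _ ((continuous_id.prodMk continuous_const).continuousOn)
      have hoc : ({s | s ∈ Icc (0:ℝ) 1 ∧ f (s, t) = w} : Set ℝ).OrdConnected := by
        constructor
        intro a ha b hb c hc
        have hcI : c ∈ Icc (0:ℝ) 1 := ⟨le_trans ha.1.1 hc.1, le_trans hc.2 hb.1.2⟩
        refine ⟨hcI, le_antisymm ?_ ?_⟩
        · have h := hmono t ht hcI hb.1 hc.2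
          simpa only [hb.2] using h
        · have h := hmono t ht ha.1 hcI hc.1
          simpa only [ha.2] using h
      exact hoc.isPreconnected
    -- the separation argument
    rw [IsPreconnected]
    rintro u v hu hv hcov ⟨pu, hpu⟩ ⟨pv, hpv⟩
    by_contra hne
    rw [not_nonempty_iff_eq_empty] at hne
    -- F ∩ u and F ∩ v are compact
    have hFu_eq : F ∩ u = F \ v := by
      ext p
      constructor
      · rintro ⟨hpF, hpu'⟩
        refine ⟨hpF, fun hpv' => ?_⟩
        have hmem : p ∈ F ∩ (u ∩ v) := ⟨hpF, hpu', hpv'⟩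
        rw [hne] at hmem; exact hmem
      · rintro ⟨hpF, hpv'⟩
        rcases hcov hpF with h | h
        · exact ⟨hpF, h⟩
        · exact absurd h hpv'
    have hFv_eq : F ∩ v = F \ u := by
      ext p
      constructor
      · rintro ⟨hpF, hpv'⟩
        refine ⟨hpF, fun hpu' => ?_⟩
        have hmem : p ∈ F ∩ (u ∩ v) := ⟨hpF, hpu', hpv'⟩
        rw [hne] at hmem; exact hmem
      · rintro ⟨hpF, hpu'⟩
        rcases hcov hpF with h | h
        · exact absurd h hpu'
        · exact ⟨hpF, h⟩
    have hFu_cp : IsCompact (F ∩ u) := by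
      rw [hFu_eq]
      exact hFcompact.of_isClosed_subset (hFcl.sdiff hv) diff_subset
    have hFv_cp : IsCompact (F ∩ v) := by
      rw [hFv_eq]
      exact hFcompact.of_isClosed_subset (hFcl.sdiff hu) diff_subset
    -- the projections to the t-axis are closed
    set Tu : Set ℝ := Prod.snd '' (F ∩ u) with hTudef
    set Tv : Set ℝ := Prod.snd '' (F ∩ v) with hTvdef
    have hTu_cl : IsClosed Tu := (hFu_cp.image continuous_snd).isClosed
    have hTv_cl : IsClosed Tv := (hFv_cp.image continuous_snd).isClosed
    have hcov' : Icc (0:ℝ) 1 ⊆ Tu ∪ Tv := by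
      intro t ht
      obtain ⟨s, hs, hsv⟩ := hslice_ne t ht
      have hmem : ((s, t) : ℝ × ℝ) ∈ F := ⟨⟨hs, ht⟩, hsv⟩
      rcases hcov hmem with h | h
      · exact Or.inl ⟨(s, t), ⟨hmem, h⟩, rfl⟩
      · exact Or.inr ⟨(s, t), ⟨hmem, h⟩, rfl⟩
    have hTu_ne : (Icc (0:ℝ) 1 ∩ Tu).Nonempty :=
      ⟨pu.2, hpu.1.1.2, pu, hpu, rfl⟩
    have hTv_ne : (Icc (0:ℝ) 1 ∩ Tv).Nonempty :=
      ⟨pv.2, hpv.1.1.2, pv, hpv, rfl⟩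
    obtain ⟨t, htI, htu, htv⟩ :=
      (isPreconnected_closed_iff.1 isPreconnected_Icc) Tu Tv hTu_cl hTv_cl hcov' hTu_ne hTv_ne
    -- the slice at t meets both u and v; since it is preconnected, it meets u ∩ v,
    -- contradicting F ∩ (u ∩ v) = ∅
    obtain ⟨⟨su, tu'⟩, ⟨hquF, hquu⟩, hqut⟩ := htu
    obtain ⟨⟨sv, tv'⟩, ⟨hqvF, hqvv⟩, hqvt⟩ := htv
    simp only at hqut hqvt
    rw [hqut] at hquF hquu
    rw [hqvt] at hqvF hqvv
    set P : Set (ℝ × ℝ) := (fun s => (s, t)) '' {s | s ∈ Icc (0:ℝ) 1 ∧ f (s, t) = w} with hP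
    have hPF : P ⊆ F := by
      rintro p ⟨s, ⟨hs, hsv⟩, rfl⟩
      exact ⟨⟨hs, htI⟩, hsv⟩
    have hPcov : P ⊆ u ∪ v := fun p hp => hcov (hPF hp)
    have hPu : (P ∩ u).Nonempty :=
      ⟨(su, t), ⟨su, ⟨hquF.1.1, hquF.2⟩, rfl⟩, hquu⟩
    have hPv : (P ∩ v).Nonempty :=
      ⟨(sv, t), ⟨sv, ⟨hqvF.1.1, hqvF.2⟩, rfl⟩, hqvv⟩
    obtain ⟨q, hqP, hquv⟩ := hslice_conn t htI u v hu hv hPcov hPu hPv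
    have : q ∈ F ∩ (u ∩ v) := ⟨hPF hqP, hquv⟩
    rw [hne] at this
    exact this
end
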